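/- arXiv:2403.15904 — 2 statements merged into one kernel-verified Lean document; each statement's English description precedes it below -/
import Mathlib

section
/- Let λ be a regular cardinal and X a linearly ordered set with |X| = λ > 2^{ℵ_α}, such that every subset Y ⊆ X of cardinality λ contains an element y with both {z ∈ Y : z < y} and {z ∈ Y : z > y} of cardinality λ. Then X contains a completely λ-full subset of order type ω_{α+1} or of reverse order type ω_{α+1}. -/
/-!
Call two points of `X` close if fewer than `l` points lie between them; as `l` is infinite this is
an equivalence relation. A class of size `l` would contain, by the splitting hypothesis applied
twice, two close points with `l` points of the class between them. So every class is smaller than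
`l`, and regularity of `l` leaves at least `l > 2 ^ ℵ_α` classes. Urysohn's theorem, proved through
the Erdős–Rado ramification tree, yields a monotone `ω_{α+1}`-sequence of class representatives,
and between any two of them lie `l` points.
-/

open Cardinal Set

universe u

/-- `Y` is `l`-full on the right in `X`: for every `y ∈ Y`, the union of the
intervals `(y, y')_X` over larger elements `y' ∈ Y` has cardinality `l`. -/
def FullRight {X : Type u} [LinearOrder X] (l : Cardinal.{u}) (Y : Set X) : Prop :=
  ∀ y ∈ Y, #{x : X | ∃ y' ∈ Y, y < y' ∧ y < x ∧ x < y'} = l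

/-- `Y` is `l`-full on the left in `X`. -/
def FullLeft {X : Type u} [LinearOrder X] (l : Cardinal.{u}) (Y : Set X) : Prop :=
  ∀ y ∈ Y, #{x : X | ∃ y' ∈ Y, y' < y ∧ y' < x ∧ x < y} = l

/-- `Y` is completely `l`-full in `X`: every interval of `X` between two
elements of `Y` has cardinality `l`. -/
def CompletelyFull {X : Type u} [LinearOrder X] (l : Cardinal.{u}) (Y : Set X) : Prop :=
  ∀ y ∈ Y, ∀ y' ∈ Y, y < y' → #{x : X | y < x ∧ x < y'} = l

section WellOrderedSubsets

variable {α : Type u} [LinearOrder α] [WellFoundedLT α]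

open scoped Ordinal in
theorem exists_strictMono_forall_mem_of_le_mk {c : Cardinal.{u}} {S : Set α} (h : c ≤ #S) :
    ∃ e : c.ord.ToType → α, StrictMono e ∧ ∀ b, e b ∈ S := by
  have hle : typeLT c.ord.ToType ≤ typeLT S := by
    rwa [Ordinal.type_toType, ord_le, Ordinal.card_type]
  obtain ⟨e⟩ := Ordinal.type_le_iff'.1 hle
  exact ⟨fun b => e b, fun _ _ h => e.map_rel_iff.2 h, fun b => (e b).2⟩

theorem exists_strictMono_forall_iff {c : Cardinal.{u}} (hc : ℵ₀ ≤ c) (P : c.ord.ToType → Prop) :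
    ∃ e : c.ord.ToType → c.ord.ToType, StrictMono e ∧ ∃ p : Prop, ∀ b, P (e b) ↔ p := by
  by_cases hP : c ≤ #{b | P b}
  · obtain ⟨e, he, hmem⟩ := exists_strictMono_forall_mem_of_le_mk hP
    exact ⟨e, he, True, fun b => iff_true_intro (hmem b)⟩
  · have hnP : c ≤ #({b | P b}ᶜ : Set c.ord.ToType) := by
      by_contra! hnP
      have := add_lt_of_lt hc (not_le.1 hP) hnP
      rw [mk_sum_compl, mk_ord_toType] at this
      exact this.false
    obtain ⟨e, he, hmem⟩ := exists_strictMono_forall_mem_of_le_mk hnP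
    exact ⟨e, he, False, fun b => iff_false_intro (hmem b)⟩

end WellOrderedSubsets

namespace ErdosRado

variable {B I : Type u} [LinearOrder B] [WellFoundedLT B] [LinearOrder I] [WellFoundedLT I]
  (c : I → I → Prop)

def branchClass (b : B) (t : ∀ b' < b, I → I) (x : I) : Set I :=
  {y | ∀ b' (h : b' < b), t b' h y = t b' h x ∧ y ≠ t b' h x ∧ (c (t b' h x) y ↔ c (t b' h x) x)}

open Classical in
/-- The ramification tree of `c`: `node c b x` is the least `y` agreeing with `x` below level `b`
(same lower nodes, distinct from them, same `c`-colour towards each), or `x` if there is none.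
Unless `x` is its own node at some level, its nodes form an end-homogeneous branch; if every `x`
is, then `x` is determined by that level and its colours towards its lower nodes. -/
noncomputable def node : B → I → I :=
  wellFounded_lt.fix fun b t x =>
    if h : (branchClass c b t x).Nonempty then wellFounded_lt.min _ h else x

def cls (b : B) (x : I) : Set I := branchClass c b (fun b' _ => node c b') x

open Classical in
theorem node_eq (b : B) (x : I) :
    node c b x = if h : (cls c b x).Nonempty then wellFounded_lt.min _ h else x := by
  rw [node, WellFounded.fix_eq]
  rfl

variable {c}

theorem mem_cls_iff {b : B} {x y : I} : y ∈ cls c b x ↔ ∀ b' < b,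
    node c b' y = node c b' x ∧ y ≠ node c b' x ∧ (c (node c b' x) y ↔ c (node c b' x) x) :=
  Iff.rfl

theorem self_mem_cls {b : B} {x : I} (h : ∀ b' < b, x ≠ node c b' x) : x ∈ cls c b x :=
  fun b' hb' => ⟨rfl, h b' hb', Iff.rfl⟩

theorem node_mem_cls {b : B} {x : I} (h : (cls c b x).Nonempty) : node c b x ∈ cls c b x := by
  rw [node_eq, dif_pos h]
  exact WellFounded.min_mem _ _ h

theorem node_le {b : B} {x y : I} (hy : y ∈ cls c b x) : node c b x ≤ y := by
  rw [node_eq, dif_pos ⟨y, hy⟩]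
  exact WellFounded.min_le _ hy

theorem cls_eq_of_mem {b : B} {x y : I} (hy : y ∈ cls c b x) : cls c b y = cls c b x := by
  ext z
  refine ⟨fun hz b' hb' => ?_, fun hz b' hb' => ?_⟩ <;>
    obtain ⟨hyx, -, hcy⟩ := hy b' hb' <;> obtain ⟨hz₁, hz₂, hz₃⟩ := hz b' hb'
  · rw [hyx] at hz₁ hz₂ hz₃
    exact ⟨hz₁, hz₂, hz₃.trans hcy⟩
  · rw [hyx]
    exact ⟨hz₁, hz₂, hz₃.trans hcy.symm⟩

theorem node_eq_of_mem {b : B} {x y : I} (hy : y ∈ cls c b x) : node c b y = node c b x := by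
  have hcls := cls_eq_of_mem hy
  apply le_antisymm
  · exact node_le (hcls ▸ node_mem_cls ⟨y, hy⟩)
  · exact node_le (hcls.symm ▸ node_mem_cls ⟨y, hcls ▸ hy⟩)

theorem mk_le_mk_sigma_of_forall_exists_node_eq_self (h : ∀ x : I, ∃ b : B, node c b x = x) :
    #I ≤ #(Σ b : B, Iio b → Prop) := by
  let d : I → B := fun x => wellFounded_lt.min {b | node c b x = x} (h x)
  have hd : ∀ x, node c (d x) x = x := fun x => wellFounded_lt.min_mem _ (h x)
  have hlt : ∀ x, ∀ b < d x, x ≠ node c b x := fun x b hb heq =>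
    wellFounded_lt.not_lt_min {b | node c b x = x} heq.symm hb
  refine mk_le_of_injective (f := fun x => ⟨d x, fun b => c (node c b.1 x) x⟩) fun x y hxy => ?_
  have hdxy : d x = d y := congrArg Sigma.fst hxy
  have hcol : ∀ b (hbx : b < d x) (hby : b < d y), c (node c b x) x = c (node c b y) y := by
    intro b hbx hby
    have hb : HEq (⟨b, hbx⟩ : Iio (d x)) (⟨b, hby⟩ : Iio (d y)) :=
      (Subtype.heq_iff_coe_eq fun _ => by rw [mem_Iio, mem_Iio, hdxy]).2 rfl
    have hcol := congr_heq (Sigma.mk.inj hxy).2 hb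
    exact hcol
  have hnode : ∀ b ≤ d x, node c b x = node c b y := by
    intro b
    induction b using WellFoundedLT.induction with
    | _ b ih =>
    intro hb
    refine (node_eq_of_mem (mem_cls_iff.2 fun b' hb' => ?_)).symm
    have hb'x := hb'.trans_le hb
    have hb'y := hdxy ▸ hb'x
    rw [hcol b' hb'x hb'y, ih b' hb' (hb'.le.trans hb)]
    exact ⟨rfl, hlt y b' hb'y, Iff.rfl⟩
  rw [← hd x, hnode _ le_rfl, hdxy, hd y]

theorem exists_injective_endHomogeneous (hI : #(Σ b : B, Iio b → Prop) < #I) (c : I → I → Prop) :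
    ∃ a : B → I, Function.Injective a ∧
      ∃ ε : B → Prop, ∀ b' b, b' < b → (c (a b') (a b) ↔ ε b') := by
  obtain ⟨x, hx⟩ : ∃ x : I, ∀ b : B, node c b x ≠ x := by
    by_contra! h
    exact (mk_le_mk_sigma_of_forall_exists_node_eq_self h).not_gt hI
  have hmem : ∀ b, node c b x ∈ cls c b x := fun b =>
    node_mem_cls ⟨x, self_mem_cls fun b' _ => (hx b').symm⟩
  refine ⟨fun b => node c b x, .of_lt_imp_ne fun b' b hb => ?_, fun b' => c (node c b' x) x,
    fun b' b hb => (hmem b b' hb).2.2⟩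
  exact (hmem b b' hb).2.1.symm

end ErdosRado

theorem mk_sigma_Iio_le_two_power {κ : Cardinal.{u}} (hκ : ℵ₀ ≤ κ) :
    #(Σ b : (Order.succ κ).ord.ToType, Iio b → Prop) ≤ 2 ^ κ := by
  have hIio : ∀ b : (Order.succ κ).ord.ToType, #(Iio b → Prop) ≤ 2 ^ κ := fun b => by
    have hb := mk_Iio_lt b (by rw [mk_ord_toType, Ordinal.type_toType])
    rw [mk_ord_toType, Order.lt_succ_iff] at hb
    exact (mk_set (α := Iio b)).trans_le (power_le_power_left two_ne_zero hb)
  calc #(Σ b : (Order.succ κ).ord.ToType, Iio b → Prop)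
      ≤ sum fun _ : (Order.succ κ).ord.ToType => (2 : Cardinal) ^ κ := by
        rw [mk_sigma]; exact sum_le_sum _ _ hIio
    _ = Order.succ κ * 2 ^ κ := by rw [sum_const', mk_ord_toType]
    _ ≤ 2 ^ κ * 2 ^ κ := by gcongr; exact Order.succ_le_of_lt (cantor κ)
    _ = 2 ^ κ := mul_eq_self (hκ.trans (cantor κ).le)

theorem exists_injective_homogeneous {κ : Cardinal.{u}} (hκ : ℵ₀ ≤ κ) {I : Type u}
    [LinearOrder I] [WellFoundedLT I] (hI : 2 ^ κ < #I) (c : I → I → Prop) :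
    ∃ a : (Order.succ κ).ord.ToType → I, Function.Injective a ∧
      ∃ p : Prop, ∀ b' b, b' < b → (c (a b') (a b) ↔ p) := by
  obtain ⟨a, ha, ε, hε⟩ :=
    ErdosRado.exists_injective_endHomogeneous ((mk_sigma_Iio_le_two_power hκ).trans_lt hI) c
  obtain ⟨e, he, p, hp⟩ := exists_strictMono_forall_iff (hκ.trans (Order.le_succ κ)) ε
  exact ⟨a ∘ e, ha.comp he.injective, p, fun b' b hb => (hε _ _ (he hb)).trans (hp b')⟩

theorem exists_strictMono_or_strictAnti_of_two_power_lt {κ : Cardinal.{u}} (hκ : ℵ₀ ≤ κ)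
    {T : Type u} [LinearOrder T] (hT : 2 ^ κ < #T) :
    ∃ f : (Order.succ κ).ord.ToType → T, StrictMono f ∨ StrictAnti f := by
  obtain ⟨g⟩ := Cardinal.eq.1 (mk_ord_toType #T)
  obtain ⟨a, ha, p, hp⟩ := exists_injective_homogeneous hκ (I := (#T).ord.ToType)
    (by rwa [mk_ord_toType]) (fun i j => g i < g j)
  refine ⟨g ∘ a, (em p).imp (fun hp' b' b hb => (hp b' b hb).2 hp') fun hp' b' b hb => ?_⟩
  exact (not_lt.1 (hp' ∘ (hp b' b hb).1)).lt_of_ne ((g.injective.comp ha).ne hb.ne')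

theorem le_mk_quotient_of_mk_setOf_rel_lt {X : Type u} {l : Cardinal.{u}} (hl : l.IsRegular)
    (hX : l ≤ #X) (s : Setoid X) (hs : ∀ x, #{y | s y x} < l) : l ≤ #(Quotient s) := by
  by_contra! hQ
  obtain ⟨q, hq⟩ := infinite_pigeonhole_card (Quotient.mk s) l hX hl.aleph0_le
    (by rwa [hl.cof_ord])
  induction q using Quotient.inductionOn with | h x => ?_
  have hfiber : Quotient.mk s ⁻¹' {⟦x⟧} = {y | s y x} := by
    ext y; simp [Quotient.eq]
  exact (hq.trans_lt (hfiber ▸ hs x)).false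

section SmallIntervals

variable {X : Type u} [LinearOrder X] {l : Cardinal.{u}}

def smallIntervalSetoid (hl : ℵ₀ ≤ l) : Setoid X where
  r x y := #(uIcc x y) < l
  iseqv :=
    { refl := fun x => by simpa using one_lt_aleph0.trans_le hl
      symm := fun h => by rwa [uIcc_comm]
      trans := fun h₁ h₂ => (mk_le_mk_of_subset uIcc_subset_uIcc_union_uIcc).trans_lt
        ((mk_union_le _ _).trans_lt (add_lt_of_lt hl h₁ h₂)) }

theorem mk_setOf_smallIntervalSetoid_lt (hl : ℵ₀ ≤ l) (hX : #X ≤ l)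
    (hsplit : ∀ Y : Set X, #Y = l →
      ∃ y ∈ Y, #{z ∈ Y | z < y} = l ∧ #{z ∈ Y | y < z} = l) (x : X) :
    #{y | smallIntervalSetoid hl y x} < l := by
  set C := {y | smallIntervalSetoid hl y x}
  by_contra! hC
  obtain ⟨y, hyC, hbelow, -⟩ := hsplit C (((mk_set_le C).trans hX).antisymm hC)
  obtain ⟨z, ⟨hzC, hzy⟩, -, habove⟩ := hsplit _ hbelow
  have hsub : {w ∈ {w ∈ C | w < y} | z < w} ⊆ uIcc z y := fun w hw => by
    rw [uIcc_of_le hzy.le]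
    exact ⟨hw.2.le, hw.1.2.le⟩
  exact (habove ▸ mk_le_mk_of_subset hsub).not_gt
    ((smallIntervalSetoid hl).trans hzC ((smallIntervalSetoid hl).symm hyC))

theorem le_mk_Ioo_of_le_mk_Icc (hl : ℵ₀ ≤ l) {a b : X} (hab : a ≤ b) (h : l ≤ #(Icc a b)) :
    l ≤ #(Ioo a b) := by
  by_contra! hIoo
  have hends : #({a, b} : Set X) < l := (toFinite _).lt_aleph0.trans_le hl
  have := (le_mk_sdiff_add_mk (Icc a b) (Ioo a b)).trans_lt (add_lt_of_lt hl
    (by rwa [Icc_sdiff_Ioo_same hab]) hIoo)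
  exact (h.trans_lt this).false

theorem completelyFull_range_out (hl : ℵ₀ ≤ l) (hX : #X = l) :
    CompletelyFull l (range (Quotient.out : Quotient (smallIntervalSetoid hl) → X)) := by
  rintro _ ⟨q, rfl⟩ _ ⟨q', rfl⟩ hlt
  refine ((mk_set_le _).trans hX.le).antisymm (le_mk_Ioo_of_le_mk_Icc hl hlt.le ?_)
  rw [← uIcc_of_le hlt.le]
  exact not_lt.1 fun h => hlt.ne (congrArg _ (Quotient.out_equiv_out.1 h))

end SmallIntervals

/-- Theorem 3.2: if `|X| = l > 2 ^ ℵ_α` with `l` regular and the splitting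
hypothesis `(∗∗)` holds, then `X` contains a completely `l`-full subset of
order type `ω_{α+1}` or of reverse order type `ω_{α+1}`. -/
theorem stmt9 (α : Ordinal.{u}) (l : Cardinal.{u}) (hl : l.IsRegular)
    (X : Type u) [LinearOrder X] (hX : #X = l) (hbig : 2 ^ Cardinal.aleph α < l)
    (hsplit : ∀ Y : Set X, #Y = l →
      ∃ y ∈ Y, #{z ∈ Y | z < y} = l ∧ #{z ∈ Y | y < z} = l) :
    ∃ f : (Cardinal.aleph (α + 1)).ord.ToType → X,
      (StrictMono f ∨ StrictAnti f) ∧ CompletelyFull l (Set.range f) := by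
  let s := smallIntervalSetoid (X := X) hl.aleph0_le
  have hQ : l ≤ #(Quotient s) := le_mk_quotient_of_mk_setOf_rel_lt hl hX.ge s
    (mk_setOf_smallIntervalSetoid_lt hl.aleph0_le hX.le hsplit)
  let R := range (Quotient.out : Quotient s → X)
  have hR : 2 ^ aleph α < #R := by
    rw [mk_range_eq _ Quotient.out_injective]
    exact hbig.trans_le hQ
  obtain ⟨f, hf⟩ := exists_strictMono_or_strictAnti_of_two_power_lt (aleph0_le_aleph α) hR
  rw [← succ_aleph]
  refine ⟨(↑) ∘ f,
    hf.imp (Subtype.strictMono_coe _).comp (Subtype.strictMono_coe _).comp_strictAnti, ?_⟩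
  have hsub : range ((↑) ∘ f) ⊆ R := (range_comp_subset_range f _).trans Subtype.range_coe.subset
  exact fun y hy y' hy' => completelyFull_range_out hl.aleph0_le hX y (hsub hy) y' (hsub hy')
end

section
/- Let X = ℝ × ℤ with the lexicographic order and the order topology, and let 𝔠 = 2^{ℵ₀}. Then X is not [𝔠, 𝔠]-compact, yet X has no gap of type 𝔠: every gap of X has both types at most ℵ₀. -/
open Cardinal Set

universe u

/-- `X` is `[l, l]`-compact: every open cover of cardinality `≤ l` has a
subcover of cardinality `< l`. -/
def CompactCC (l : Cardinal.{u}) (X : Type u) [TopologicalSpace X] : Prop :=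
  ∀ 𝒰 : Set (Set X), (∀ U ∈ 𝒰, IsOpen U) → ⋃₀ 𝒰 = Set.univ → #𝒰 ≤ l →
    ∃ 𝒱 ⊆ 𝒰, ⋃₀ 𝒱 = Set.univ ∧ #𝒱 < l

/-- `(A, B)` is a gap of the linearly ordered topological space `X`. -/
def IsGap {X : Type u} [LinearOrder X] [TopologicalSpace X] (A B : Set X) : Prop :=
  IsOpen A ∧ IsOpen B ∧ A ∪ B = Set.univ ∧ A.Nonempty ∧ B.Nonempty ∧
  (∀ a ∈ A, ∀ b ∈ B, a < b) ∧
  (∀ a ∈ A, ∃ a' ∈ A, a < a') ∧ (∀ b ∈ B, ∃ b' ∈ B, b' < b)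

/-- The cofinality of a subset `A` of a linear order: the least cardinality of
a subset of `A` cofinal in `A`. -/
noncomputable def setCof {X : Type u} [LinearOrder X] (A : Set X) : Cardinal :=
  sInf {c | ∃ S ⊆ A, (∀ a ∈ A, ∃ s ∈ S, a ≤ s) ∧ #S = c}

/-- The coinitiality of a subset `B` of a linear order: the least cardinality
of a subset of `B` coinitial in `B`. -/
noncomputable def setCoi {X : Type u} [LinearOrder X] (B : Set X) : Cardinal :=
  sInf {c | ∃ S ⊆ B, (∀ b ∈ B, ∃ s ∈ S, s ≤ b) ∧ #S = c}

/-- `k` is a type of the gap `(A, B)`. -/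
def GapHasType {X : Type u} [LinearOrder X] (A B : Set X) (k : Cardinal) : Prop :=
  setCof A = k ∨ setCoi B = k

/-! Every point of `ℝ ×ₗ ℤ` has an immediate predecessor and successor inside its `ℤ`-fibre, so
the order topology is discrete and the cover by singletons, of size `𝔠`, has no smaller subcover.
On the other hand, a lower set `A` is cofinally met by the countable set of its points lying over
a rational or over the greatest first coordinate of `A`: a point of `A` over a smaller first
coordinate lies below some point of `A` over a rational, since between two reals there is a
rational. Dually for upper sets, and the two halves of a gap are a lower and an upper set. -/

theorem setCof_le_mk {X : Type u} [LinearOrder X] {A S : Set X} (hSA : S ⊆ A)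
    (hS : ∀ a ∈ A, ∃ s ∈ S, a ≤ s) : setCof A ≤ #S :=
  csInf_le' ⟨S, hSA, hS, rfl⟩

theorem setCoi_le_mk {X : Type u} [LinearOrder X] {B S : Set X} (hSB : S ⊆ B)
    (hS : ∀ b ∈ B, ∃ s ∈ S, s ≤ b) : setCoi B ≤ #S :=
  csInf_le' ⟨S, hSB, hS, rfl⟩

namespace Prod.Lex

variable {α β : Type*}

section Preorder

variable [Preorder α] [Preorder β]

instance succOrderOfRight [SuccOrder β] [NoMaxOrder β] : SuccOrder (α ×ₗ β) :=
  SuccOrder.ofSuccLeIff (fun p ↦ toLex ((ofLex p).1, Order.succ (ofLex p).2)) fun {p q} ↦ by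
    rw [le_iff, lt_iff]
    simp only [ofLex_toLex, Order.succ_le_iff]

instance predOrderOfRight [PredOrder β] [NoMinOrder β] : PredOrder (α ×ₗ β) :=
  PredOrder.ofPredLeIff (fun p ↦ toLex ((ofLex p).1, Order.pred (ofLex p).2)) fun {p q} ↦ by
    rw [le_iff, lt_iff]
    simp only [ofLex_toLex, Order.le_pred_iff, eq_comm]

end Preorder

theorem countable_setOf_fst_mem [Countable β] {C : Set α} (hC : C.Countable) :
    {p : α ×ₗ β | (ofLex p).1 ∈ C}.Countable := by
  refine ((hC.prod (Set.countable_univ (α := β))).image toLex).mono fun p hp ↦ ?_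
  exact ⟨ofLex p, ⟨hp, Set.mem_univ _⟩, toLex_ofLex p⟩

variable [LinearOrder α] [LinearOrder β] [Countable β] {D : Set α} (hD : D.Countable)
  (hdense : ∀ x y : α, x < y → ∃ d ∈ D, x < d ∧ d < y)
include hD hdense

theorem setCof_le_aleph0_of_isLowerSet {A : Set (α ×ₗ β)} (hA : IsLowerSet A) :
    setCof A ≤ ℵ₀ := by
  set top := {x | IsGreatest ((fun p : α ×ₗ β ↦ (ofLex p).1) '' A) x}
  set S := {p ∈ A | (ofLex p).1 ∈ D ∪ top}
  have hS : S.Countable :=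
    (countable_setOf_fst_mem (hD.union (show top.Subsingleton from
      fun _ hx _ hy ↦ hx.unique hy).countable)).mono fun _ hp ↦ hp.2
  refine (setCof_le_mk (S := S) (fun _ hp ↦ hp.1) ?_).trans hS.le_aleph0
  intro a ha
  by_cases htop : (ofLex a).1 ∈ top
  · exact ⟨a, ⟨ha, Or.inr htop⟩, le_rfl⟩
  have hnot : (ofLex a).1 ∉ upperBounds ((fun p : α ×ₗ β ↦ (ofLex p).1) '' A) :=
    fun h ↦ htop ⟨⟨a, ha, rfl⟩, h⟩
  simp only [mem_upperBounds, Set.forall_mem_image, not_forall, not_le] at hnot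
  obtain ⟨a', ha', hlt⟩ := hnot
  obtain ⟨d, hd, had, hda'⟩ := hdense _ _ hlt
  have hda' : toLex (d, (ofLex a).2) < a' := lt_iff.2 (Or.inl hda')
  exact ⟨_, ⟨hA hda'.le ha', Or.inl hd⟩, le_iff.2 (Or.inl had)⟩

theorem setCoi_le_aleph0_of_isUpperSet {B : Set (α ×ₗ β)} (hB : IsUpperSet B) :
    setCoi B ≤ ℵ₀ := by
  set bot := {x | IsLeast ((fun p : α ×ₗ β ↦ (ofLex p).1) '' B) x}
  set S := {p ∈ B | (ofLex p).1 ∈ D ∪ bot}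
  have hS : S.Countable :=
    (countable_setOf_fst_mem (hD.union (show bot.Subsingleton from
      fun _ hx _ hy ↦ hx.unique hy).countable)).mono fun _ hp ↦ hp.2
  refine (setCoi_le_mk (S := S) (fun _ hp ↦ hp.1) ?_).trans hS.le_aleph0
  intro b hb
  by_cases hbot : (ofLex b).1 ∈ bot
  · exact ⟨b, ⟨hb, Or.inr hbot⟩, le_rfl⟩
  have hnot : (ofLex b).1 ∉ lowerBounds ((fun p : α ×ₗ β ↦ (ofLex p).1) '' B) :=
    fun h ↦ hbot ⟨⟨b, hb, rfl⟩, h⟩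
  simp only [mem_lowerBounds, Set.forall_mem_image, not_forall, not_le] at hnot
  obtain ⟨b', hb', hlt⟩ := hnot
  obtain ⟨d, hd, hb'd, hdb⟩ := hdense _ _ hlt
  have hb'd : b' < toLex (d, (ofLex b).2) := lt_iff.2 (Or.inl hb'd)
  exact ⟨_, ⟨hB hb'd.le hb', Or.inl hd⟩, le_iff.2 (Or.inl hdb)⟩

end Prod.Lex

theorem IsGap.isLowerSet {X : Type u} [LinearOrder X] [TopologicalSpace X] {A B : Set X}
    (h : IsGap A B) : IsLowerSet A := by
  obtain ⟨-, -, hunion, -, -, hlt, -⟩ := h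
  intro a x hxa ha
  by_contra hx
  have hxB : x ∈ B := (Set.eq_univ_iff_forall.1 hunion x).resolve_left hx
  exact (hlt a ha x hxB).not_ge hxa

theorem IsGap.isUpperSet {X : Type u} [LinearOrder X] [TopologicalSpace X] {A B : Set X}
    (h : IsGap A B) : IsUpperSet B := by
  obtain ⟨-, -, hunion, -, -, hlt, -⟩ := h
  intro b x hbx hb
  by_contra hx
  have hxA : x ∈ A := (Set.eq_univ_iff_forall.1 hunion x).resolve_right hx
  exact (hlt x hxA b hb).not_ge hbx

theorem not_compactCC_mk_of_discreteTopology (X : Type u) [TopologicalSpace X]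
    [DiscreteTopology X] : ¬ CompactCC #X X := by
  intro hX
  set 𝒰 : Set (Set X) := Set.range fun x ↦ {x}
  have h𝒰 : #𝒰 = #X := Cardinal.mk_range_eq _ Set.singleton_injective
  obtain ⟨𝒱, h𝒱𝒰, h𝒱, hlt⟩ := hX 𝒰 (by rintro _ ⟨x, rfl⟩; exact isOpen_discrete _)
    (Set.sUnion_eq_univ_iff.2 fun x ↦ ⟨{x}, ⟨x, rfl⟩, rfl⟩) h𝒰.le
  have h𝒰𝒱 : 𝒰 ⊆ 𝒱 := by
    rintro _ ⟨x, rfl⟩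
    obtain ⟨_, hV, hxV⟩ := Set.sUnion_eq_univ_iff.1 h𝒱 x
    obtain ⟨y, rfl⟩ := h𝒱𝒰 hV
    rwa [Set.mem_singleton_iff.1 hxV]
  exact (h𝒰 ▸ Cardinal.mk_le_mk_of_subset h𝒰𝒱).not_gt hlt

theorem mk_lex_real_int : #(ℝ ×ₗ ℤ) = 𝔠 := by
  rw [Cardinal.mk_congr ofLex, Cardinal.mk_prod, Cardinal.mk_real, Cardinal.mk_int]
  simp [Cardinal.mul_aleph0_eq Cardinal.aleph0_le_continuum]

/-- Remark 1.7: `ℝ ×ₗ ℤ` with the order topology is not `[𝔠, 𝔠]`-compact but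
has no gap of type `𝔠`: both types of every gap are at most `ℵ₀`. -/
theorem stmt15 :
    letI : TopologicalSpace (Lex (ℝ × ℤ)) := Preorder.topology (Lex (ℝ × ℤ))
    ¬ CompactCC Cardinal.continuum (Lex (ℝ × ℤ)) ∧
      ∀ A B : Set (Lex (ℝ × ℤ)), IsGap A B →
        setCof A ≤ Cardinal.aleph0 ∧ setCoi B ≤ Cardinal.aleph0 := by
  let _ : TopologicalSpace (ℝ ×ₗ ℤ) := Preorder.topology (ℝ ×ₗ ℤ)
  have : OrderTopology (ℝ ×ₗ ℤ) := ⟨rfl⟩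
  have : DiscreteTopology (ℝ ×ₗ ℤ) := .of_predOrder_succOrder
  have hdense (x y : ℝ) (hxy : x < y) : ∃ d ∈ Set.range ((↑) : ℚ → ℝ), x < d ∧ d < y := by
    obtain ⟨q, hq⟩ := exists_rat_btwn hxy
    exact ⟨q, ⟨q, rfl⟩, hq⟩
  refine ⟨mk_lex_real_int ▸ not_compactCC_mk_of_discreteTopology _, fun A B hAB ↦ ?_⟩
  exact ⟨Prod.Lex.setCof_le_aleph0_of_isLowerSet (Set.countable_range _) hdense hAB.isLowerSet,
    Prod.Lex.setCoi_le_aleph0_of_isUpperSet (Set.countable_range _) hdense hAB.isUpperSet⟩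
end
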